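/- For any positive integer k, the anti-van der Waerden number aw(P_2 □ C_{2k+1}, 3) = 3. -/

import Mathlib

/-!
Suppose a colouring of `P₂ □ C_{2k+1}` has three colours but no rainbow 3-AP. If some column
`{(i, a), (i', a)}` carries two colours `α ≠ β` and a third colour `γ` sits at `(i, a + x)` with
`1 ≤ x ≤ k`, then `γ` also sits at `(i, a - x)`, and for `x < k` the next column carries `β, α`
with `γ` at offset `x - 1` from it; induction down to `x = 1` yields a rainbow triple, while at
`x = k` the oddness of the cycle (`a - k = (a + 1) + k`) does. Reflecting the cycle covers offsets
beyond `k`, so every column is monochromatic. Then an edge `(r, a) ~ (r, b)` with two colours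
confines every colour to these two: the distances from a vertex to `(r, a)` and `(r, b)` differ by
at most one, and a difference of one is absorbed by moving the nearer endpoint to the other row.
-/

open SimpleGraph

/-- A rainbow 3-AP in `G` under coloring `c`: three vertices with
`d(v₁,v₂) = d(v₂,v₃)` receiving pairwise distinct colors. -/
def HasRainbow3AP {V C : Type*} (G : SimpleGraph V) (c : V → C) : Prop :=
  ∃ v₁ v₂ v₃ : V, G.dist v₁ v₂ = G.dist v₂ v₃ ∧
    c v₁ ≠ c v₂ ∧ c v₂ ≠ c v₃ ∧ c v₁ ≠ c v₃

/-- The anti-van der Waerden number `aw(G,3)`: the least positive `r` such that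
every surjective coloring with `r` colors yields a rainbow 3-AP. -/
noncomputable def aw {V : Type*} (G : SimpleGraph V) : ℕ :=
  sInf {r : ℕ | 0 < r ∧ ∀ c : V → Fin r, Function.Surjective c → HasRainbow3AP G c}

section Rainbow

variable {V W C : Type*} {G : SimpleGraph V}

lemma eq_or_eq_or_eq_of_not_hasRainbow3AP {c : V → C} (hc : ¬HasRainbow3AP G c) {u v w : V}
    (h : G.dist u v = G.dist v w) : c u = c v ∨ c v = c w ∨ c u = c w := by
  by_contra! hne
  exact hc ⟨u, v, w, h, hne.1, hne.2.1, hne.2.2⟩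

lemma HasRainbow3AP.of_comp {H : SimpleGraph W} {f : V → W}
    (hf : ∀ u v, H.dist (f u) (f v) = G.dist u v) {c : W → C} (h : HasRainbow3AP G (c ∘ f)) :
    HasRainbow3AP H c := by
  obtain ⟨u, v, w, hd, h⟩ := h
  exact ⟨f u, f v, f w, by rwa [hf, hf], h⟩

lemma HasRainbow3AP.three_le_card [Fintype C] {c : V → C} (h : HasRainbow3AP G c) :
    3 ≤ Fintype.card C := by
  classical
  obtain ⟨u, v, w, -, huv, hvw, huw⟩ := h
  calc 3 = ({c u, c v, c w} : Finset C).card := by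
        rw [Finset.card_eq_three.2 ⟨_, _, _, huv, huw, hvw, rfl⟩]
    _ ≤ Fintype.card C := Finset.card_le_univ _

lemma aw_eq_three [Fintype V] (hV : 2 ≤ Fintype.card V)
    (h : ∀ c : V → Fin 3, Function.Surjective c → HasRainbow3AP G c) : aw G = 3 := by
  refine le_antisymm (Nat.sInf_le ⟨by norm_num, h⟩) (le_csInf ⟨3, by norm_num, h⟩ ?_)
  rintro r ⟨hr, hrc⟩
  by_contra! hr3
  have : Nonempty (Fin r) := ⟨⟨0, hr⟩⟩
  obtain ⟨e⟩ := Function.Embedding.nonempty_of_card_le (α := Fin r) (β := V)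
    (by rw [Fintype.card_fin]; omega)
  have := (hrc _ (Function.invFun_surjective e.injective)).three_le_card
  rw [Fintype.card_fin] at this
  omega

end Rainbow

namespace SimpleGraph

section BoxProd

variable {α β C : Type*}

lemma dist_boxProd {G : SimpleGraph α} {H : SimpleGraph β} {x y : α × β}
    (hG : G.Reachable x.1 y.1) (hH : H.Reachable x.2 y.2) :
    (G □ H).dist x y = G.dist x.1 y.1 + H.dist x.2 y.2 := by
  simp only [dist, edist_boxProd]
  exact ENat.toNat_add (edist_ne_top_iff_reachable.2 hG) (edist_ne_top_iff_reachable.2 hH)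

variable {H : SimpleGraph β} {c : Fin 2 × β → C}

lemma dist_pathGraph_two_boxProd (hH : H.Connected) (i j : Fin 2) (a b : β) :
    (pathGraph 2 □ H).dist (i, a) (j, b) = (if i = j then 0 else 1) + H.dist a b := by
  rw [dist_boxProd ((pathGraph_connected 1).preconnected i j) (hH.preconnected a b),
    pathGraph_two_eq_top, dist_top]

lemma eq_or_eq_or_eq_of_not_hasRainbow3AP_pathGraph_two_boxProd (hH : H.Connected)
    (hc : ¬HasRainbow3AP (pathGraph 2 □ H) c) (u v w : Fin 2 × β)
    (h : (if v.1 = u.1 then 0 else 1) + H.dist v.2 u.2 =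
      (if v.1 = w.1 then 0 else 1) + H.dist v.2 w.2) :
    c u = c v ∨ c v = c w ∨ c u = c w :=
  eq_or_eq_or_eq_of_not_hasRainbow3AP hc <| by
    rwa [dist_comm, ← Prod.mk.eta (p := u), ← Prod.mk.eta (p := v), ← Prod.mk.eta (p := w),
      dist_pathGraph_two_boxProd hH, dist_pathGraph_two_boxProd hH]

lemma eq_or_eq_of_adj_of_columns_monochromatic (hH : H.Connected)
    (hc : ¬HasRainbow3AP (pathGraph 2 □ H) c) (hcol : ∀ r r' y, c (r, y) = c (r', y))
    {r : Fin 2} {a b : β} (hab : H.Adj a b) (hne : c (r, a) ≠ c (r, b)) (y : β) :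
    c (r, y) = c (r, a) ∨ c (r, y) = c (r, b) := by
  wlog hle : H.dist y b ≤ H.dist y a generalizing a b
  · exact (this hab.symm hne.symm (by omega)).symm
  obtain ⟨r', hr'⟩ := exists_ne r
  have hlip : H.dist y a ≤ H.dist y b + 1 := by
    have := hH.dist_triangle (u := y) (v := b) (w := a)
    rwa [dist_eq_one_iff_adj.2 hab.symm] at this
  have collide := eq_or_eq_or_eq_of_not_hasRainbow3AP_pathGraph_two_boxProd hH hc
  rcases (show H.dist y a = H.dist y b ∨ H.dist y a = H.dist y b + 1 by omega) with h | h
  · have := collide (r, a) (r, y) (r, b) (by simp [h])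
    grind
  · have := collide (r, a) (r, y) (r', b) (by simp [h, hr'.symm]; omega)
    grind

end BoxProd

end SimpleGraph

lemma Fin.min_val_add_one_val_neg_sub_one_le {n : ℕ} (s : Fin (n + 1)) :
    min (s + 1).val (-s - 1).val ≤ min s.val (-s).val + 1 := by
  have hneg := Fin.val_neg s
  have hlast : s = Fin.last n → s.val = n := fun h => by simp [h]
  have hzero : -s = 0 → s.val = 0 := fun h => by simp [neg_eq_zero.1 h]
  rw [Fin.val_add_one, Fin.coe_sub_one]
  split_ifs at hneg ⊢ <;> omega

namespace SimpleGraph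

section Cycle

variable {n : ℕ}

lemma cycleGraph_dist_le_val_sub (a b : Fin (n + 1)) :
    (cycleGraph (n + 1)).dist a b ≤ (b - a).val := by
  induction h : (b - a).val generalizing b with
  | zero => rw [sub_eq_zero.1 (Fin.ext h), dist_self]
  | succ m ih =>
    have hba : b - a ≠ 0 := fun h0 => by simp [h0] at h
    have hn : 1 ≤ n := by have := (b - a).isLt; omega
    have hprev : (b - 1 - a).val = m := by
      rw [sub_right_comm, Fin.coe_sub_one, if_neg hba, h, Nat.add_sub_cancel]
    have hadj : (cycleGraph (n + 1)).Adj (b - 1) b := by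
      rw [cycleGraph_adj', sub_sub_cancel, Fin.val_one', Nat.mod_eq_of_lt (by omega)]
      exact Or.inr rfl
    calc (cycleGraph (n + 1)).dist a b
        ≤ (cycleGraph (n + 1)).dist a (b - 1) + (cycleGraph (n + 1)).dist (b - 1) b :=
          cycleGraph_connected.dist_triangle
      _ ≤ m + 1 := by rw [dist_eq_one_iff_adj.2 hadj]; exact Nat.add_le_add_right (ih _ hprev) 1

lemma cycleGraph_min_val_sub_le_of_adj (a : Fin (n + 1)) {u v : Fin (n + 1)}
    (h : (cycleGraph (n + 1)).Adj u v) :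
    min (v - a).val (a - v).val ≤ min (u - a).val (a - u).val + 1 := by
  have hn : 1 ≤ n := by
    by_contra! h0
    obtain rfl : n = 0 := by omega
    exact h.ne (Fin.subsingleton_one.elim _ _)
  have hone : ∀ s : Fin (n + 1), s.val = 1 → s = 1 := fun s hs =>
    Fin.ext (by rw [hs, Fin.val_one', Nat.mod_eq_of_lt (by omega)])
  rcases cycleGraph_adj'.1 h with huv | hvu
  · obtain rfl : u = v + 1 := by rw [← hone _ huv, add_sub_cancel]
    have := Fin.min_val_add_one_val_neg_sub_one_le (a - (v + 1))
    rwa [neg_sub, show a - (v + 1) + 1 = a - v by abel, show v + 1 - a - 1 = v - a by abel,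
      min_comm, min_comm (a - (v + 1)).val] at this
  · obtain rfl : v = u + 1 := by rw [← hone _ hvu, add_sub_cancel]
    have := Fin.min_val_add_one_val_neg_sub_one_le (u - a)
    rwa [neg_sub, show u - a + 1 = u + 1 - a by abel, show a - u - 1 = a - (u + 1) by abel]
      at this

lemma cycleGraph_dist (a b : Fin (n + 1)) :
    (cycleGraph (n + 1)).dist a b = min (b - a).val (a - b).val := by
  refine le_antisymm (le_min (cycleGraph_dist_le_val_sub a b) ?_) ?_
  · rw [dist_comm]; exact cycleGraph_dist_le_val_sub b a
  have potential : ∀ {u : Fin (n + 1)} (q : (cycleGraph (n + 1)).Walk u b),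
      min (b - a).val (a - b).val ≤ min (u - a).val (a - u).val + q.length := by
    intro u q
    induction q with
    | nil => exact Nat.le_add_right _ _
    | cons h q ih =>
      have := cycleGraph_min_val_sub_le_of_adj a h
      rw [Walk.length_cons]
      omega
  obtain ⟨p, hp⟩ := cycleGraph_connected.exists_walk_length_eq_dist a b
  simpa [hp] using potential p

lemma cycleGraph_dist_neg (a b : Fin (n + 1)) :
    (cycleGraph (n + 1)).dist (-a) (-b) = (cycleGraph (n + 1)).dist a b := by
  rw [cycleGraph_dist, cycleGraph_dist, neg_sub_neg, neg_sub_neg, min_comm]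

open Fin.CommRing

variable {k : ℕ}

lemma cycleGraph_dist_add_natCast (b : Fin (2 * k + 1)) {m : ℕ} (hm : m ≤ k) :
    (cycleGraph (2 * k + 1)).dist b (b + (m : Fin (2 * k + 1))) = m := by
  have hm' : ((m : Fin (2 * k + 1)) : ℕ) = m := by
    rw [Fin.val_natCast, Nat.mod_eq_of_lt (by omega)]
  rw [cycleGraph_dist, add_sub_cancel_left, sub_add_cancel_left, Fin.val_neg, hm']
  split_ifs with h0
  · rw [← hm', h0, Fin.val_zero, min_self]
  · omega

lemma cycleGraph_dist_sub_natCast (b : Fin (2 * k + 1)) {m : ℕ} (hm : m ≤ k) :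
    (cycleGraph (2 * k + 1)).dist b (b - (m : Fin (2 * k + 1))) = m := by
  simpa [dist_comm] using cycleGraph_dist_add_natCast (b - (m : Fin (2 * k + 1))) hm

lemma cycleGraph_dist_add_one (b : Fin (2 * k + 1)) (hk : 1 ≤ k) :
    (cycleGraph (2 * k + 1)).dist b (b + 1) = 1 := by
  simpa using cycleGraph_dist_add_natCast b hk

end Cycle

end SimpleGraph

section OddPrism

open SimpleGraph Fin.CommRing

variable {k : ℕ} {C : Type*} {c : Fin 2 × Fin (2 * k + 1) → C}

lemma oddPrism_color_sub_eq_color_add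
    (hc : ¬HasRainbow3AP (pathGraph 2 □ cycleGraph (2 * k + 1)) c)
    {i i' : Fin 2} (hi : i ≠ i') {m : ℕ} (hm : m ≤ k) {a : Fin (2 * k + 1)}
    (hα : c (i, a) ≠ c (i', a)) (hγα : c (i, a + (m : Fin (2 * k + 1))) ≠ c (i, a))
    (hγβ : c (i, a + (m : Fin (2 * k + 1))) ≠ c (i', a)) :
    c (i, a - (m : Fin (2 * k + 1))) = c (i, a + (m : Fin (2 * k + 1))) := by
  have collide := eq_or_eq_or_eq_of_not_hasRainbow3AP_pathGraph_two_boxProd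
    (cycleGraph_connected (n := 2 * k)) hc
  have h1 := collide (i, a + m) (i, a) (i, a - m)
    (by simp [cycleGraph_dist_add_natCast _ hm, cycleGraph_dist_sub_natCast _ hm])
  have h2 := collide (i, a + m) (i', a) (i, a - m)
    (by simp [hi.symm, cycleGraph_dist_add_natCast _ hm, cycleGraph_dist_sub_natCast _ hm])
  grind -ring

lemma oddPrism_color_other_add_one
    (hc : ¬HasRainbow3AP (pathGraph 2 □ cycleGraph (2 * k + 1)) c)
    {i i' : Fin 2} (hi : i ≠ i') {m : ℕ} (hm : 1 ≤ m) (hmk : m ≤ k) {a : Fin (2 * k + 1)}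
    (hα : c (i, a) ≠ c (i', a)) (hγα : c (i, a + (m : Fin (2 * k + 1))) ≠ c (i, a))
    (hγβ : c (i, a + (m : Fin (2 * k + 1))) ≠ c (i', a)) :
    c (i', a + 1) = c (i, a) := by
  have collide := eq_or_eq_or_eq_of_not_hasRainbow3AP_pathGraph_two_boxProd
    (cycleGraph_connected (n := 2 * k)) hc
  have hshift : a + (m : Fin (2 * k + 1)) = a + 1 + ((m - 1 : ℕ) : Fin (2 * k + 1)) := by
    push_cast [Nat.cast_sub hm]; ring
  have d1 := cycleGraph_dist_add_one a (by omega)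
  have d2 : (cycleGraph (2 * k + 1)).dist (a + (m : Fin (2 * k + 1))) a = m := by
    rw [SimpleGraph.dist_comm]; exact cycleGraph_dist_add_natCast a hmk
  have d3 : (cycleGraph (2 * k + 1)).dist (a + (m : Fin (2 * k + 1))) (a + 1) = m - 1 := by
    rw [SimpleGraph.dist_comm, hshift]; exact cycleGraph_dist_add_natCast _ (by omega)
  have h1 := collide (i', a + 1) (i', a) (i, a) (by simp [hi.symm, d1])
  have h2 := collide (i', a + 1) (i, a + m) (i, a) (by simp [hi, d2, d3]; omega)
  grind -ring

lemma oddPrism_color_add_one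
    (hc : ¬HasRainbow3AP (pathGraph 2 □ cycleGraph (2 * k + 1)) c)
    {i i' : Fin 2} (hi : i ≠ i') {m : ℕ} (hmk : m + 1 ≤ k) {a : Fin (2 * k + 1)}
    (hα : c (i, a) ≠ c (i', a)) (hγα : c (i, a + (m : Fin (2 * k + 1))) ≠ c (i, a))
    (hγβ : c (i, a + (m : Fin (2 * k + 1))) ≠ c (i', a)) :
    c (i, a + 1) = c (i', a) := by
  have collide := eq_or_eq_or_eq_of_not_hasRainbow3AP_pathGraph_two_boxProd
    (cycleGraph_connected (n := 2 * k)) hc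
  have hmirror := oddPrism_color_sub_eq_color_add hc hi (by omega) hα hγα hγβ
  have d1 := cycleGraph_dist_add_one a (by omega)
  have d2 : (cycleGraph (2 * k + 1)).dist (a - (m : Fin (2 * k + 1))) a = m := by
    simpa using cycleGraph_dist_add_natCast (a - (m : Fin (2 * k + 1))) (m := m) (by omega)
  have d3 : (cycleGraph (2 * k + 1)).dist (a - (m : Fin (2 * k + 1))) (a + 1) = m + 1 := by
    have := cycleGraph_dist_add_natCast (a - (m : Fin (2 * k + 1))) hmk
    rwa [show a - m + ((m + 1 : ℕ) : Fin (2 * k + 1)) = a + 1 by push_cast; ring] at this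
  have h1 := collide (i, a + 1) (i, a) (i', a) (by simp [hi, d1])
  have h2 := collide (i, a + 1) (i, a - m) (i', a) (by simp [hi, d2, d3]; omega)
  grind -ring

lemma oddPrism_false_of_third_color_at_half
    (hc : ¬HasRainbow3AP (pathGraph 2 □ cycleGraph (2 * k + 1)) c)
    {i i' : Fin 2} (hi : i ≠ i') (hk : 1 ≤ k) {a : Fin (2 * k + 1)}
    (hα : c (i, a) ≠ c (i', a)) (hγα : c (i, a + (k : Fin (2 * k + 1))) ≠ c (i, a))
    (hγβ : c (i, a + (k : Fin (2 * k + 1))) ≠ c (i', a)) : False := by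
  have hmirror := oddPrism_color_sub_eq_color_add hc hi le_rfl hα hγα hγβ
  have hbot := oddPrism_color_other_add_one hc hi hk le_rfl hα hγα hγβ
  -- the cycle has odd length, so `a - k` is also at distance `k` from `a + 1`
  have hwrap : a - (k : Fin (2 * k + 1)) = a + 1 + k := by
    have h0 : ((2 * k + 1 : ℕ) : Fin (2 * k + 1)) = 0 := Fin.natCast_self _
    push_cast at h0
    linear_combination -h0
  have d1 : (cycleGraph (2 * k + 1)).dist (a - (k : Fin (2 * k + 1))) a = k := by
    simpa using cycleGraph_dist_add_natCast (a - (k : Fin (2 * k + 1))) le_rfl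
  have d2 : (cycleGraph (2 * k + 1)).dist (a - (k : Fin (2 * k + 1))) (a + 1) = k := by
    rw [hwrap, SimpleGraph.dist_comm]; exact cycleGraph_dist_add_natCast (a + 1) le_rfl
  have h := eq_or_eq_or_eq_of_not_hasRainbow3AP_pathGraph_two_boxProd cycleGraph_connected hc
    (i', a + 1) (i, a - k) (i', a) (by simp [hi, d1, d2])
  grind -ring

lemma oddPrism_false_of_third_color_ahead
    (hc : ¬HasRainbow3AP (pathGraph 2 □ cycleGraph (2 * k + 1)) c)
    {i i' : Fin 2} (hi : i ≠ i') {x : ℕ} (hx : 1 ≤ x) (hxk : x ≤ k) {a : Fin (2 * k + 1)}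
    (hα : c (i, a) ≠ c (i', a)) (hγα : c (i, a + (x : Fin (2 * k + 1))) ≠ c (i, a))
    (hγβ : c (i, a + (x : Fin (2 * k + 1))) ≠ c (i', a)) : False := by
  induction x, hx using Nat.le_induction generalizing a with
  | base =>
    have d1 := cycleGraph_dist_add_one a hxk
    have := eq_or_eq_or_eq_of_not_hasRainbow3AP_pathGraph_two_boxProd cycleGraph_connected hc
      (i, a + 1) (i, a) (i', a) (by simp [hi, d1])
    simp only [Nat.cast_one] at hγα hγβ
    grind -ring
  | succ x hx ih =>
    rcases (show x + 1 + 1 ≤ k ∨ x + 1 = k by omega) with hlt | rfl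
    · have htop := oddPrism_color_add_one hc hi hlt hα hγα hγβ
      have hbot := oddPrism_color_other_add_one hc hi (by omega) hxk hα hγα hγβ
      have hshift : a + ((x + 1 : ℕ) : Fin (2 * k + 1)) = a + 1 + (x : Fin (2 * k + 1)) := by
        push_cast; ring
      exact ih (by omega) (a := a + 1) (by rw [htop, hbot]; exact hα.symm)
        (by rwa [← hshift, htop]) (by rwa [← hshift, hbot])
    · exact oddPrism_false_of_third_color_at_half hc hi (by omega) hα hγα hγβ

lemma oddPrism_eq_or_eq_of_val_sub_le
    (hc : ¬HasRainbow3AP (pathGraph 2 □ cycleGraph (2 * k + 1)) c)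
    {i i' : Fin 2} (hi : i ≠ i') {a : Fin (2 * k + 1)} (ha : c (i, a) ≠ c (i', a))
    {y : Fin (2 * k + 1)} (hy : (y - a).val ≤ k) :
    c (i, y) = c (i, a) ∨ c (i, y) = c (i', a) := by
  have hya : y = a + (((y - a).val : ℕ) : Fin (2 * k + 1)) := by
    rw [Fin.cast_val_eq_self, add_sub_cancel]
  rcases Nat.eq_zero_or_pos (y - a).val with h0 | hpos
  · left; rw [sub_eq_zero.1 (Fin.ext h0)]
  by_contra! h
  rw [hya] at h
  exact oddPrism_false_of_third_color_ahead hc hi hpos hy ha h.1 h.2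

lemma oddPrism_eq_or_eq_of_column_ne
    (hc : ¬HasRainbow3AP (pathGraph 2 □ cycleGraph (2 * k + 1)) c)
    {i i' : Fin 2} (hi : i ≠ i') {a : Fin (2 * k + 1)} (ha : c (i, a) ≠ c (i', a))
    (y : Fin (2 * k + 1)) : c (i, y) = c (i, a) ∨ c (i, y) = c (i', a) := by
  rcases le_or_gt (y - a).val k with hy | hy
  · exact oddPrism_eq_or_eq_of_val_sub_le hc hi ha hy
  let σ : Fin 2 × Fin (2 * k + 1) → Fin 2 × Fin (2 * k + 1) := fun v => (v.1, -v.2)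
  have hσ : ∀ u v, (pathGraph 2 □ cycleGraph (2 * k + 1)).dist (σ u) (σ v) =
      (pathGraph 2 □ cycleGraph (2 * k + 1)).dist u v := fun u v => by
    rw [← Prod.mk.eta (p := u), ← Prod.mk.eta (p := v)]
    simp only [σ, dist_pathGraph_two_boxProd cycleGraph_connected, cycleGraph_dist_neg]
  have hy' : (-y - -a).val ≤ k := by
    rw [neg_sub_neg, ← neg_sub, Fin.val_neg, if_neg (fun h => by simp [h] at hy)]
    have := (y - a).isLt
    omega
  simpa [σ] using oddPrism_eq_or_eq_of_val_sub_le (c := c ∘ σ) (fun h => hc (h.of_comp hσ)) hi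
    (a := -a) (by simpa [σ] using ha) hy'

lemma oddPrism_columns_monochromatic
    (hc : ¬HasRainbow3AP (pathGraph 2 □ cycleGraph (2 * k + 1)) c)
    {u v w : Fin 2 × Fin (2 * k + 1)} (huv : c u ≠ c v) (hvw : c v ≠ c w) (huw : c u ≠ c w)
    (r r' : Fin 2) (j : Fin (2 * k + 1)) : c (r, j) = c (r', j) := by
  by_contra hj
  have hr : r ≠ r' := by rintro rfl; exact hj rfl
  have hall (y : Fin (2 * k + 1)) (s : Fin 2) : c (s, y) = c (r, j) ∨ c (s, y) = c (r', j) := by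
    rcases eq_or_ne s r with rfl | hs
    · exact oddPrism_eq_or_eq_of_column_ne hc hr hj y
    · obtain rfl : s = r' := by omega
      exact (oddPrism_eq_or_eq_of_column_ne hc hr.symm (Ne.symm hj) y).symm
  have := hall u.2 u.1; have := hall v.2 v.1; have := hall w.2 w.1
  simp only [Prod.mk.eta] at *
  grind

theorem oddPrism_hasRainbow3AP {u v w : Fin 2 × Fin (2 * k + 1)} (huv : c u ≠ c v)
    (hvw : c v ≠ c w) (huw : c u ≠ c w) :
    HasRainbow3AP (pathGraph 2 □ cycleGraph (2 * k + 1)) c := by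
  by_contra hc
  have hcol := oddPrism_columns_monochromatic hc huv hvw huw
  obtain ⟨p⟩ :=
    ((pathGraph_connected 1).boxProd (cycleGraph_connected (n := 2 * k))).preconnected u v
  obtain ⟨⟨⟨⟨r, a⟩, ⟨r', b⟩⟩, hadj⟩, -, hx, hy⟩ :=
    p.exists_boundary_dart {x | c x = c u} rfl huv.symm
  simp only [Set.mem_ofPred_eq] at hx hy
  rcases boxProd_adj.1 hadj with ⟨-, rfl : a = b⟩ | ⟨hab, rfl : r = r'⟩
  · exact hy (hx ▸ hcol r' r a)
  have hall (x : Fin 2 × Fin (2 * k + 1)) : c x = c (r, a) ∨ c x = c (r, b) := by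
    rw [← Prod.mk.eta (p := x), hcol x.1 r]
    exact eq_or_eq_of_adj_of_columns_monochromatic cycleGraph_connected hc hcol hab
      (fun h => hy (h ▸ hx)) x.2
  have := hall u; have := hall v; have := hall w
  grind

end OddPrism

theorem stmt_7_general (k : ℕ) :
    aw (pathGraph 2 □ cycleGraph (2 * k + 1)) = 3 := by
  refine aw_eq_three (by simp) fun c hc => ?_
  obtain ⟨u, hu⟩ := hc 0
  obtain ⟨v, hv⟩ := hc 1
  obtain ⟨w, hw⟩ := hc 2
  exact oddPrism_hasRainbow3AP (u := u) (v := v) (w := w)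
    (by simp [hu, hv]) (by simp [hv, hw]) (by simp [hu, hw])

theorem stmt_7 (k : ℕ) (hk : 1 ≤ k) :
    aw (pathGraph 2 □ cycleGraph (2 * k + 1)) = 3 :=
  stmt_7_general k
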